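/- The function F is twice continuously differentiable, and for every (a,b) ∈ ℝⁿ×ℝⁿ and every direction (u,v) ∈ ℝⁿ×ℝⁿ, the second derivative quadratic form of F at (a,b) satisfies D²F(a,b)[(u,v),(u,v)] = 4⟨a∘u − b∘v, ∇²h(s)(a∘u − b∘v)⟩ + 2Σᵢ[(∇h(s)ᵢ + μ)uᵢ² + (μ − ∇h(s)ᵢ)vᵢ²], where s = a² − b² and ∘ denotes the entrywise product. -/

import Mathlib

/-!
Along the line `t ↦ (a, b) + t • (u, v)` the entrywise difference of squares moves on the
quadratic curve `s + t • 2(a∘u − b∘v) + t² • (u² − v²)` and the penalty is a quadratic polynomial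
in `t`. So `D²F(a,b)[(u,v),(u,v)]`, the second derivative of `F` along that line, comes from the
second-order chain rule along a quadratic curve `γ`: `D²h(γ 0)[γ' 0, γ' 0] + Dh(γ 0)(γ'' 0)`.
-/

open scoped BigOperators

section QuadraticCurve

variable {𝕜 : Type*} [NontriviallyNormedField 𝕜]
  {E F : Type*} [NormedAddCommGroup E] [NormedSpace 𝕜 E] [NormedAddCommGroup F] [NormedSpace 𝕜 F]

theorem iteratedFDeriv_apply_const_eq_iteratedDeriv_add_smul {k : ℕ} {f : E → F}
    (hf : ContDiff 𝕜 k f) (p w : E) :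
    iteratedFDeriv 𝕜 k f p (fun _ => w) = iteratedDeriv k (fun t : 𝕜 => f (p + t • w)) 0 := by
  have hline : (fun t : 𝕜 => f (p + t • w))
      = (fun y => f (p + y)) ∘ ContinuousLinearMap.toSpanSingleton 𝕜 w := rfl
  have hshift : ContDiff 𝕜 k (fun y => f (p + y)) := hf.comp (contDiff_const.add contDiff_id)
  rw [iteratedDeriv_eq_iteratedFDeriv, hline,
    ContinuousLinearMap.iteratedFDeriv_comp_right _ hshift _ le_rfl, iteratedFDeriv_comp_add_left]
  simp

theorem hasDerivAt_quadratic_curve (x y z : E) (t : 𝕜) :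
    HasDerivAt (fun t : 𝕜 => x + t • y + t ^ 2 • z) (y + (2 * t) • z) t := by
  simpa using (((hasDerivAt_id t).smul_const y).const_add x).fun_add
    ((hasDerivAt_pow 2 t).smul_const z)

theorem iteratedDeriv_two_quadratic (α β γ x : 𝕜) :
    iteratedDeriv 2 (fun t => α + t * β + t ^ 2 * γ) x = 2 * γ := by
  have hderiv : deriv (fun t => α + t * β + t ^ 2 * γ) = fun t => β + 2 * t * γ :=
    funext fun t => (hasDerivAt_quadratic_curve α β γ t).deriv
  rw [iteratedDeriv_succ, iteratedDeriv_one, hderiv]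
  simp

theorem iteratedDeriv_two_comp_quadratic_curve {f : E → F} (hf : ContDiff 𝕜 2 f) (x y z : E) :
    iteratedDeriv 2 (fun t : 𝕜 => f (x + t • y + t ^ 2 • z)) 0 =
      iteratedFDeriv 𝕜 2 f x (fun _ => y) + (2 : 𝕜) • fderiv 𝕜 f x z := by
  have hf1 : Differentiable 𝕜 f := hf.differentiable two_ne_zero
  have hf2 : Differentiable 𝕜 (fderiv 𝕜 f) :=
    (hf.fderiv_right one_add_one_eq_two.le).differentiable one_ne_zero
  have hderiv : deriv (fun t : 𝕜 => f (x + t • y + t ^ 2 • z))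
      = fun t => fderiv 𝕜 f (x + t • y + t ^ 2 • z) (y + (2 * t) • z) :=
    funext fun t =>
      ((hf1 _).hasFDerivAt.comp_hasDerivAt t (hasDerivAt_quadratic_curve x y z t)).deriv
  have hvel : HasDerivAt (fun t : 𝕜 => y + (2 * t) • z) ((2 : 𝕜) • z) 0 := by
    simpa using (((hasDerivAt_id (0 : 𝕜)).const_mul 2).smul_const z).const_add y
  have hacc := ((hf2 _).hasFDerivAt.comp_hasDerivAt (0 : 𝕜)
    (hasDerivAt_quadratic_curve x y z 0)).clm_apply hvel
  rw [iteratedDeriv_succ, iteratedDeriv_one, hderiv, iteratedFDeriv_two_apply]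
  simpa using hacc.deriv

end QuadraticCurve

section HadamardDifference

variable {n : ℕ}

local notation "ℝⁿ" => EuclideanSpace ℝ (Fin n)

theorem sq_sub_sq_add_smul (a b u v : ℝⁿ) (t : ℝ) :
    (WithLp.toLp 2 (fun i => (a + t • u) i ^ 2 - (b + t • v) i ^ 2) : ℝⁿ) =
      WithLp.toLp 2 (fun i => a i ^ 2 - b i ^ 2)
        + t • (2 : ℝ) • WithLp.toLp 2 (fun i => a i * u i - b i * v i)
        + t ^ 2 • WithLp.toLp 2 (fun i => u i ^ 2 - v i ^ 2) := by
  ext i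
  simp only [PiLp.add_apply, PiLp.smul_apply, smul_eq_mul]
  ring

theorem sum_sq_add_sq_add_smul (a b u v : ℝⁿ) (t : ℝ) :
    ∑ i, ((a + t • u) i ^ 2 + (b + t • v) i ^ 2) =
      ∑ i, (a i ^ 2 + b i ^ 2) + t * ∑ i, 2 * (a i * u i + b i * v i)
        + t ^ 2 * ∑ i, (u i ^ 2 + v i ^ 2) := by
  simp only [Finset.mul_sum, ← Finset.sum_add_distrib, PiLp.add_apply, PiLp.smul_apply,
    smul_eq_mul]
  exact Finset.sum_congr rfl fun i _ => by ring

theorem fderiv_apply_eq_sum_gradient_mul (f : ℝⁿ → ℝ) (x y : ℝⁿ) :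
    fderiv ℝ f x y = ∑ i, gradient f x i * y i := by
  rw [← inner_gradient_left, PiLp.inner_apply]
  simp [mul_comm]

end HadamardDifference

theorem stmt3 (n : ℕ)
    (h : EuclideanSpace ℝ (Fin n) → ℝ) (hh : ContDiff ℝ 2 h)
    (μ : ℝ)
    (F : EuclideanSpace ℝ (Fin n) × EuclideanSpace ℝ (Fin n) → ℝ)
    (hF : F = fun p =>
      h (WithLp.toLp 2 (fun i => p.1 i ^ 2 - p.2 i ^ 2)) + μ * ∑ i, (p.1 i ^ 2 + p.2 i ^ 2)) :
    ContDiff ℝ 2 F ∧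
    ∀ (a b u v : EuclideanSpace ℝ (Fin n)),
      iteratedFDeriv ℝ 2 F (a, b) (fun _ => (u, v)) =
        4 * iteratedFDeriv ℝ 2 h (WithLp.toLp 2 (fun i => a i ^ 2 - b i ^ 2))
            (fun _ => (WithLp.toLp 2 (fun i => a i * u i - b i * v i) : EuclideanSpace ℝ (Fin n)))
        + 2 * ∑ i, ((gradient h (WithLp.toLp 2 (fun j => a j ^ 2 - b j ^ 2)) i + μ) * u i ^ 2
            + (μ - gradient h (WithLp.toLp 2 (fun j => a j ^ 2 - b j ^ 2)) i) * v i ^ 2) := by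
  subst hF
  have hF2 : ContDiff ℝ 2 fun p : EuclideanSpace ℝ (Fin n) × EuclideanSpace ℝ (Fin n) =>
      h (WithLp.toLp 2 (fun i => p.1 i ^ 2 - p.2 i ^ 2)) + μ * ∑ i, (p.1 i ^ 2 + p.2 i ^ 2) := by
    fun_prop
  refine ⟨hF2, fun a b u v => ?_⟩
  rw [iteratedFDeriv_apply_const_eq_iteratedDeriv_add_smul hF2]
  simp only [Prod.fst_add, Prod.snd_add, Prod.smul_fst, Prod.smul_snd, sq_sub_sq_add_smul,
    sum_sq_add_sq_add_smul]
  rw [iteratedDeriv_fun_add (by fun_prop) (by fun_prop), iteratedDeriv_const_mul_field,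
    iteratedDeriv_two_comp_quadratic_curve hh, iteratedDeriv_two_quadratic,
    ContinuousMultilinearMap.map_smul_univ _ (fun _ => (2 : ℝ)), fderiv_apply_eq_sum_gradient_mul]
  simp only [Finset.prod_const, Finset.card_univ, Fintype.card_fin, smul_eq_mul, Finset.mul_sum]
  rw [add_assoc, ← Finset.sum_add_distrib]
  congr 1
  · norm_num
  · exact Finset.sum_congr rfl fun i _ => by ring
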